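/- arXiv:1512.05511 — 12 statements merged into one kernel-verified Lean document; each statement's English description precedes it below -/
import Mathlib

section
/- Let m : ℕ, let E i (for i : Fin m) be directed graphs on finite types V i, and let x y : Π i, V i. If y is reachable from x in the synchronous product of the graphs E i, then there exists n : ℕ with n ≤ ∏ i, Fintype.card (V i) such that for every i : Fin m there is a walk of length n from x i to y i in E i. -/
/-- There is a walk of length `n` from `x` to `y` in the directed graph `E`. -/
def HasWalk {V : Type*} (E : V → V → Prop) (n : ℕ) (x y : V) : Prop :=
  ∃ f : Fin (n + 1) → V, f 0 = x ∧ f (Fin.last n) = y ∧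
    ∀ i : Fin n, E (f i.castSucc) (f i.succ)

/-- ℕ-indexed version of walks, easier for arithmetic. -/
def NatWalk {V : Type*} (E : V → V → Prop) (n : ℕ) (x y : V) : Prop :=
  ∃ g : ℕ → V, g 0 = x ∧ g n = y ∧ ∀ k < n, E (g k) (g (k + 1))

lemma hasWalk_iff_natWalk {V : Type*} (E : V → V → Prop) (n : ℕ) (x y : V) :
    HasWalk E n x y ↔ NatWalk E n x y := by
  constructor
  · rintro ⟨f, h0, hn, he⟩
    refine ⟨fun k => f ⟨min k n, by omega⟩, ?_, ?_, ?_⟩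
    · have : (⟨min 0 n, by omega⟩ : Fin (n + 1)) = 0 := by
        ext; simp
      simp only [this, h0]
    · have : (⟨min n n, by omega⟩ : Fin (n + 1)) = Fin.last n := by
        ext; simp [Fin.last]
      simp only [this, hn]
    · intro k hk
      have h1 : (⟨min k n, by omega⟩ : Fin (n + 1)) = (⟨k, hk⟩ : Fin n).castSucc := by
        ext; simp [Fin.castSucc]; omega
      have h2 : (⟨min (k + 1) n, by omega⟩ : Fin (n + 1)) = (⟨k, hk⟩ : Fin n).succ := by
        ext; simp [Fin.succ]; omega
      simp only [h1, h2]; exact he ⟨k, hk⟩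
  · rintro ⟨g, h0, hn, he⟩
    refine ⟨fun i => g i.val, h0, by simpa [Fin.last] using hn, fun i => ?_⟩
    simpa using he i.val i.isLt

lemma natWalk_shorten {V : Type*} [Fintype V] (E : V → V → Prop) :
    ∀ n (x y : V), NatWalk E n x y → ∃ n' ≤ Fintype.card V, NatWalk E n' x y := by
  intro n
  induction n using Nat.strong_induction_on with
  | _ n ih =>
    intro x y hw
    by_cases hn : n ≤ Fintype.card V
    · exact ⟨n, hn, hw⟩
    push_neg at hn
    obtain ⟨g, h0, hN, he⟩ := hw
    obtain ⟨a, b, hne, hab⟩ :=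
      Fintype.exists_ne_map_eq_of_card_lt (fun i : Fin (n + 1) => g i.val)
        (by simpa using by omega)
    -- WLOG a.val < b.val
    obtain ⟨i, j, hij, hjn, hgij⟩ : ∃ i j : ℕ, i < j ∧ j ≤ n ∧ g i = g j := by
      rcases lt_or_gt_of_ne (Fin.val_ne_of_ne hne) with hlt | hgt
      · exact ⟨a.val, b.val, hlt, by omega, hab⟩
      · exact ⟨b.val, a.val, hgt, by omega, hab.symm⟩
    set d := j - i with hd
    have hd0 : 0 < d := by omega
    have hnew : NatWalk E (n - d) x y := by
      refine ⟨fun k => if k ≤ i then g k else g (k + d), by simp [h0], ?_, ?_⟩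
      · by_cases h : n - d ≤ i
        · have hji : n - d = i := by omega
          have hjn' : j = n := by omega
          simp only [hji, le_refl, if_pos]
          rw [hgij, hjn', hN]
        · simp only [if_neg h]
          have : n - d + d = n := by omega
          rw [this, hN]
      · intro k hk
        by_cases h1 : k + 1 ≤ i
        · simp only [if_pos (by omega : k ≤ i), if_pos h1]
          exact he k (by omega)
        · by_cases h2 : k ≤ i
          · have hki : k = i := by omega
            simp only [if_pos h2, if_neg h1]
            have : k + 1 + d = j + 1 := by omega
            rw [this, hki, hgij]
            exact he j (by omega)
          · simp only [if_neg h2, if_neg h1]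
            have : k + 1 + d = k + d + 1 := by omega
            rw [this]
            exact he (k + d) (by omega)
    obtain ⟨n', hn', hw'⟩ := ih (n - d) (by omega) x y hnew
    exact ⟨n', hn', hw'⟩

theorem stmt_1 {m : ℕ} {V : Fin m → Type*} [∀ i, Fintype (V i)]
    (E : ∀ i, V i → V i → Prop) (x y : ∀ i, V i)
    (h : Relation.ReflTransGen (fun a b : ∀ i, V i => ∀ i, E i (a i) (b i)) x y) :
    ∃ n : ℕ, n ≤ ∏ i, Fintype.card (V i) ∧ ∀ i, HasWalk (E i) n (x i) (y i) := by
  -- first get a NatWalk in the product graph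
  have hwalk : ∃ n, NatWalk (fun a b : ∀ i, V i => ∀ i, E i (a i) (b i)) n x y := by
    induction h with
    | refl => exact ⟨0, fun _ => x, rfl, rfl, by omega⟩
    | tail _ hbc ih =>
      obtain ⟨n, g, h0, hn, he⟩ := ih
      rename_i b c _
      refine ⟨n + 1, fun k => if k ≤ n then g k else c, by simp [h0], by simp, ?_⟩
      intro k hk
      by_cases h1 : k + 1 ≤ n
      · simp only [if_pos (by omega : k ≤ n), if_pos h1]
        exact he k (by omega)
      · have hkn : k = n := by omega
        simp only [hkn, if_pos le_rfl, if_neg (by omega : ¬ n + 1 ≤ n), hn]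
        exact hbc
  obtain ⟨n, hn⟩ := hwalk
  obtain ⟨n', hle, g, h0, hn', he⟩ := natWalk_shorten _ n x y hn
  refine ⟨n', by simpa [Fintype.card_pi] using hle, fun i => ?_⟩
  rw [hasWalk_iff_natWalk]
  exact ⟨fun k => g k i, congrFun h0 i, congrFun hn' i, fun k hk => he k hk i⟩
end

section
/- Let E be a directed graph on a type V, let u v : V, and let E' be the directed graph with an edge from a to b iff E a b or (a, b) = (u, v). Then for all x y : V, y is reachable from x in E' if and only if y is reachable from x in E, or (u is reachable from x in E and y is reachable from v in E). -/
theorem stmt_4 {V : Type*} (E : V → V → Prop) (u v : V) :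
    ∀ x y : V,
      Relation.ReflTransGen (fun a b => E a b ∨ (a, b) = (u, v)) x y ↔
        Relation.ReflTransGen E x y ∨
          (Relation.ReflTransGen E x u ∧ Relation.ReflTransGen E v y) := by
  intro x y
  constructor
  · intro h
    induction h with
    | refl => exact Or.inl .refl
    | tail _ hbc ih =>
      rcases hbc with hE | heq
      · rcases ih with h | ⟨h1, h2⟩
        · exact Or.inl (h.tail hE)
        · exact Or.inr ⟨h1, h2.tail hE⟩
      · cases heq
        rcases ih with h | ⟨h1, _⟩
        · exact Or.inr ⟨h, .refl⟩
        · exact Or.inr ⟨h1, .refl⟩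
  · intro h
    have mono : ∀ a b, Relation.ReflTransGen E a b →
        Relation.ReflTransGen (fun a b => E a b ∨ (a, b) = (u, v)) a b := by
      intro a b hab
      exact Relation.ReflTransGen.mono (fun _ _ h => Or.inl h) a b hab
    rcases h with h | ⟨h1, h2⟩
    · exact mono _ _ h
    · exact ((mono _ _ h1).tail (Or.inr rfl)).trans (mono _ _ h2)
end

section
/- Let E be a directed graph on a type V that is acyclic, i.e. there is no x with Relation.TransGen E x x. Let u v : V with E u v, and let E' be the directed graph with an edge from a to b iff E a b and (a, b) ≠ (u, v). Then for all x y : V, y is reachable from x in E' if and only if y is reachable from x in E and, moreover, either (u is not reachable from x in E, or y is not reachable from v in E), or there exist z z' : V such that z is reachable from x in E, E z z' holds, (z, z') ≠ (u, v), y is reachable from z' in E, u is reachable from z in E, and u is not reachable from z' in E. -/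
theorem stmt_5 {V : Type*} (E : V → V → Prop)
    (hacyc : ¬ ∃ x, Relation.TransGen E x x) (u v : V) (huv : E u v) :
    ∀ x y : V,
      Relation.ReflTransGen (fun a b => E a b ∧ (a, b) ≠ (u, v)) x y ↔
        Relation.ReflTransGen E x y ∧
          ((¬ Relation.ReflTransGen E x u ∨ ¬ Relation.ReflTransGen E v y) ∨
            ∃ z z' : V, Relation.ReflTransGen E x z ∧ E z z' ∧ (z, z') ≠ (u, v) ∧
              Relation.ReflTransGen E z' y ∧ Relation.ReflTransGen E z u ∧
              ¬ Relation.ReflTransGen E z' u) := by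
  have hnvu : ¬ Relation.ReflTransGen E v u := by
    intro h
    exact hacyc ⟨u, Relation.TransGen.head' huv h⟩
  have hmono : ∀ {x y : V}, Relation.ReflTransGen (fun a b => E a b ∧ (a, b) ≠ (u, v)) x y →
      Relation.ReflTransGen E x y :=
    fun h => Relation.ReflTransGen.mono (fun a b (hab : E a b ∧ (a, b) ≠ (u, v)) => hab.1) _ _ h
  have lift : ∀ x y : V, Relation.ReflTransGen E x y →
      (∀ a b : V, Relation.ReflTransGen E x a → E a b → Relation.ReflTransGen E b y →
        (a, b) ≠ (u, v)) →
      Relation.ReflTransGen (fun a b => E a b ∧ (a, b) ≠ (u, v)) x y := by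
    intro x y h
    induction h using Relation.ReflTransGen.head_induction_on with
    | refl => intro _; exact Relation.ReflTransGen.refl
    | head hab hby ih =>
      intro hcond
      exact Relation.ReflTransGen.head ⟨hab, hcond _ _ Relation.ReflTransGen.refl hab hby⟩
        (ih fun p q hp hq hqy =>
          hcond p q (Relation.ReflTransGen.head hab hp) hq hqy)
  have fwd : ∀ x y : V,
      Relation.ReflTransGen (fun a b => E a b ∧ (a, b) ≠ (u, v)) x y →
      Relation.ReflTransGen E x u → Relation.ReflTransGen E v y →
      ∃ z z' : V, Relation.ReflTransGen E x z ∧ E z z' ∧ (z, z') ≠ (u, v) ∧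
        Relation.ReflTransGen E z' y ∧ Relation.ReflTransGen E z u ∧
        ¬ Relation.ReflTransGen E z' u := by
    intro x y h
    induction h using Relation.ReflTransGen.head_induction_on with
    | refl => intro hxu hvx; exact absurd (hvx.trans hxu) hnvu
    | @head a b hab hby ih =>
      intro hau hvy
      by_cases hb : Relation.ReflTransGen E b u
      · obtain ⟨z, z', h1, h2, h3, h4, h5, h6⟩ := ih hb hvy
        exact ⟨z, z', Relation.ReflTransGen.head hab.1 h1, h2, h3, h4, h5, h6⟩
      · exact ⟨a, b, Relation.ReflTransGen.refl, hab.1, hab.2, hmono hby, hau, hb⟩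
  intro x y
  constructor
  · intro h
    refine ⟨hmono h, ?_⟩
    by_cases hxu : Relation.ReflTransGen E x u
    · by_cases hvy : Relation.ReflTransGen E v y
      · exact Or.inr (fwd x y h hxu hvy)
      · exact Or.inl (Or.inr hvy)
    · exact Or.inl (Or.inl hxu)
  · rintro ⟨hxy, (hxu | hvy) | ⟨z, z', h1, h2, h3, h4, h5, h6⟩⟩
    · refine lift x y hxy ?_
      intro a b hxa _ _ heq
      simp only [Prod.mk.injEq] at heq
      exact hxu (heq.1 ▸ hxa)
    · refine lift x y hxy ?_
      intro a b _ _ hby heq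
      simp only [Prod.mk.injEq] at heq
      exact hvy (heq.2 ▸ hby)
    · have p1 : Relation.ReflTransGen (fun a b => E a b ∧ (a, b) ≠ (u, v)) x z := by
        refine lift x z h1 ?_
        intro a b _ _ hbz heq
        simp only [Prod.mk.injEq] at heq
        exact hnvu (heq.2 ▸ (hbz.trans h5))
      have p2 : Relation.ReflTransGen (fun a b => E a b ∧ (a, b) ≠ (u, v)) z' y := by
        refine lift z' y h4 ?_
        intro a b hza _ _ heq
        simp only [Prod.mk.injEq] at heq
        exact h6 (heq.1 ▸ hza)
      exact p1.trans (Relation.ReflTransGen.head ⟨h2, h3⟩ p2)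
end

section
/- Let E be a directed graph on a type V, let u v : V, and let E' be the directed graph with an edge from a to b iff E a b or (a, b) = (u, v). Suppose E' is acyclic, i.e. there is no x with Relation.TransGen E' x x. Then for all x y : V and all ℓ : ℕ, there is a walk of length ℓ from x to y in E' if and only if there is a walk of length ℓ from x to y in E, or there exist d d' : ℕ with d + d' + 1 = ℓ such that there is a walk of length d from x to u in E and a walk of length d' from v to y in E. -/
private lemma fcongr {V : Type*} {m : ℕ} (f : Fin m → V) {i j : Fin m}
    (h : (i:ℕ) = (j:ℕ)) : f i = f j := congrArg f (Fin.ext h)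

private lemma hasWalk_sub {V : Type*} {E : V → V → Prop} {n : ℕ} (f : Fin (n+1) → V)
    (a b : ℕ) (hab : a ≤ b) (hb : b ≤ n)
    (h : ∀ j : Fin n, a ≤ (j:ℕ) → (j:ℕ) < b → E (f j.castSucc) (f j.succ)) :
    HasWalk E (b - a) (f ⟨a, by omega⟩) (f ⟨b, by omega⟩) := by
  refine ⟨fun k => f ⟨a + k, by omega⟩, ?_, ?_, ?_⟩
  · exact fcongr f (by simp)
  · exact fcongr f (by simp [Fin.last]; omega)
  · intro i
    have := h ⟨a + i, by omega⟩ (by simp) (by simpa using by omega)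
    convert this using 2 <;> first | rfl | (ext; simp [Fin.succ]; try omega)

private lemma hasWalk_rtg {V : Type*} {E : V → V → Prop} :
    ∀ {n : ℕ} {x y : V}, HasWalk E n x y → Relation.ReflTransGen E x y := by
  intro n
  induction n with
  | zero =>
    rintro x y ⟨f, h0, hl, _⟩
    have hxy : x = y := by rw [← h0, ← hl]; exact fcongr f rfl
    exact hxy ▸ Relation.ReflTransGen.refl
  | succ n ih =>
    rintro x y ⟨f, h0, hl, he⟩
    have h1 : HasWalk E n x (f (Fin.last n).castSucc) :=
      ⟨fun k => f k.castSucc, by simpa using h0, rfl, fun i => by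
        simpa [Fin.castSucc, Fin.castAdd, Fin.castLE] using he i.castSucc⟩
    have h2 : E (f (Fin.last n).castSucc) y := by
      rw [← hl]; exact he (Fin.last n)
    exact (ih h1).tail h2

private lemma hasWalk_concat {V : Type*} {E : V → V → Prop} {d d' : ℕ} {x u v y : V}
    (h1 : HasWalk E d x u) (huv : E u v) (h2 : HasWalk E d' v y) :
    HasWalk E (d + d' + 1) x y := by
  obtain ⟨f, f0, fl, fe⟩ := h1
  obtain ⟨g, g0, gl, ge⟩ := h2
  refine ⟨fun k => if h : (k:ℕ) ≤ d then f ⟨k, by omega⟩ else g ⟨(k:ℕ) - d - 1, by omega⟩,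
    ?_, ?_, ?_⟩
  · simpa using f0
  · have hlast : ¬ ((Fin.last (d + d' + 1) : ℕ) ≤ d) := by simp [Fin.last]
    simp only [dif_neg hlast]
    rw [← gl]
    exact fcongr g (by simp [Fin.last]; omega)
  · intro i
    by_cases h : (i:ℕ) < d
    · have c1 : ((i.castSucc : ℕ) ≤ d) := by simpa using by omega
      have c2 : ((i.succ : ℕ) ≤ d) := by simp [Fin.succ]; omega
      simp only [dif_pos c1, dif_pos c2]
      have := fe ⟨i, h⟩
      convert this using 2 <;> first | rfl | (ext; simp [Fin.succ]; try omega)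
    · by_cases h' : (i:ℕ) = d
      · have c1 : ((i.castSucc : ℕ) ≤ d) := by simpa using by omega
        have c2 : ¬((i.succ : ℕ) ≤ d) := by simp [Fin.succ]; omega
        simp only [dif_pos c1, dif_neg c2]
        have e1 : f ⟨(i.castSucc : ℕ), by omega⟩ = u := by
          rw [← fl]; exact fcongr f (by simpa [Fin.last] using h')
        have e2 : g ⟨(i.succ : ℕ) - d - 1, by omega⟩ = v := by
          rw [← g0]; exact fcongr g (by simp [Fin.succ]; omega)
        rw [e1, e2]; exact huv
      · have c1 : ¬((i.castSucc : ℕ) ≤ d) := by simpa using by omega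
        have c2 : ¬((i.succ : ℕ) ≤ d) := by simp [Fin.succ]; omega
        simp only [dif_neg c1, dif_neg c2]
        have := ge ⟨(i:ℕ) - d - 1, by omega⟩
        convert this using 2 <;> first | rfl | (ext; simp [Fin.succ]; try omega)

theorem stmt_6 {V : Type*} (E : V → V → Prop) (u v : V)
    (hacyc : ¬ ∃ x, Relation.TransGen (fun a b => E a b ∨ (a, b) = (u, v)) x x) :
    ∀ (x y : V) (ℓ : ℕ),
      HasWalk (fun a b => E a b ∨ (a, b) = (u, v)) ℓ x y ↔
        HasWalk E ℓ x y ∨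
          ∃ d d' : ℕ, d + d' + 1 = ℓ ∧ HasWalk E d x u ∧ HasWalk E d' v y := by
  set E' : V → V → Prop := fun a b => E a b ∨ (a, b) = (u, v) with hE'
  have huv' : E' u v := Or.inr rfl
  intro x y ℓ
  constructor
  · rintro ⟨f, h0, hl, he⟩
    by_cases hall : ∀ i : Fin ℓ, E (f i.castSucc) (f i.succ)
    · exact Or.inl ⟨f, h0, hl, hall⟩
    · push_neg at hall
      obtain ⟨i, hi⟩ := hall
      have hspec : f i.castSucc = u ∧ f i.succ = v := by
        rcases he i with h | h
        · exact absurd h hi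
        · exact ⟨congrArg Prod.fst h, congrArg Prod.snd h⟩
      have hother : ∀ j : Fin ℓ, (j:ℕ) ≠ (i:ℕ) → E (f j.castSucc) (f j.succ) := by
        intro j hj
        rcases he j with h | h
        · exact h
        · exfalso
          have hju : f j.castSucc = u := congrArg Prod.fst h
          have hjv : f j.succ = v := congrArg Prod.snd h
          apply hacyc
          rcases lt_or_gt_of_ne hj with hlt | hlt
          · -- j < i : walk from f (j+1) = v to f i = u in E'
            have w : HasWalk E' ((i:ℕ) - ((j:ℕ)+1)) (f ⟨(j:ℕ)+1, by omega⟩)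
                (f ⟨(i:ℕ), by omega⟩) :=
              hasWalk_sub f ((j:ℕ)+1) (i:ℕ) (by omega) (by omega)
                (fun k _ _ => he k)
            have e1 : f ⟨(j:ℕ)+1, by omega⟩ = v := by
              rw [← hjv]; exact fcongr f (by simp [Fin.succ])
            have e2 : f ⟨(i:ℕ), by omega⟩ = u := by
              rw [← hspec.1]; exact fcongr f (by simp)
            rw [e1, e2] at w
            exact ⟨v, Relation.TransGen.tail' (hasWalk_rtg w) huv'⟩
          · -- i < j : walk from f (i+1) = v to f j = u in E'
            have w : HasWalk E' ((j:ℕ) - ((i:ℕ)+1)) (f ⟨(i:ℕ)+1, by omega⟩)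
                (f ⟨(j:ℕ), by omega⟩) :=
              hasWalk_sub f ((i:ℕ)+1) (j:ℕ) (by omega) (by omega)
                (fun k _ _ => he k)
            have e1 : f ⟨(i:ℕ)+1, by omega⟩ = v := by
              rw [← hspec.2]; exact fcongr f (by simp [Fin.succ])
            have e2 : f ⟨(j:ℕ), by omega⟩ = u := by
              rw [← hju]; exact fcongr f (by simp)
            rw [e1, e2] at w
            exact ⟨v, Relation.TransGen.tail' (hasWalk_rtg w) huv'⟩
      right
      refine ⟨(i:ℕ), ℓ - (i:ℕ) - 1, by omega, ?_, ?_⟩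
      · have w : HasWalk E ((i:ℕ) - 0) (f ⟨0, by omega⟩) (f ⟨(i:ℕ), by omega⟩) :=
          hasWalk_sub f 0 (i:ℕ) (by omega) (by omega)
            (fun k _ hk => hother k (by omega))
        have e2 : f ⟨(i:ℕ), by omega⟩ = u := by
          rw [← hspec.1]; exact fcongr f (by simp)
        simpa [e2, h0] using w
      · have w : HasWalk E (ℓ - ((i:ℕ)+1)) (f ⟨(i:ℕ)+1, by omega⟩) (f ⟨ℓ, by omega⟩) :=
          hasWalk_sub f ((i:ℕ)+1) ℓ (by omega) (by omega)
            (fun k hk _ => hother k (by omega))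
        have e1 : f ⟨(i:ℕ)+1, by omega⟩ = v := by
          rw [← hspec.2]; exact fcongr f (by simp [Fin.succ])
        have e2 : f ⟨ℓ, by omega⟩ = y := by
          rw [← hl]; exact fcongr f (by simp [Fin.last])
        have hℓ : ℓ - ((i:ℕ)+1) = ℓ - (i:ℕ) - 1 := by omega
        rw [e1, e2, hℓ] at w
        exact w
  · rintro (⟨f, h0, hl, he⟩ | ⟨d, d', hdd, h1, h2⟩)
    · exact ⟨f, h0, hl, fun i => Or.inl (he i)⟩
    · have m1 : HasWalk E' d x u := by
        obtain ⟨f, a, b, c⟩ := h1; exact ⟨f, a, b, fun i => Or.inl (c i)⟩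
      have m2 : HasWalk E' d' v y := by
        obtain ⟨f, a, b, c⟩ := h2; exact ⟨f, a, b, fun i => Or.inl (c i)⟩
      have := hasWalk_concat m1 huv' m2
      rwa [hdd] at this
end

section
/- Let E be a directed graph on a type V that is acyclic, i.e. there is no x with Relation.TransGen E x x. Let u v : V with E u v, and let E' be the directed graph with an edge from a to b iff E a b and (a, b) ≠ (u, v). Then for all x y : V and all ℓ : ℕ, there is a walk of length ℓ from x to y in E' if and only if y is reachable from x in E and, moreover, either ((u is not reachable from x in E, or y is not reachable from v in E) and there is a walk of length ℓ from x to y in E), or there exist z z' : V and d d' : ℕ with d + d' + 1 = ℓ such that there is a walk of length d from x to z in E, E z z' holds, (z, z') ≠ (u, v), there is a walk of length d' from z' to y in E, u is reachable from z in E, and u is not reachable from z' in E. -/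
section aux
variable {V : Type*} {E : V → V → Prop} {n : ℕ} {x y : V}

lemma hasWalk_zero : HasWalk E 0 x y ↔ x = y := by
  constructor
  · rintro ⟨f, h0, hl, _⟩
    rw [← h0, ← hl]; rfl
  · rintro rfl
    exact ⟨fun _ => x, rfl, rfl, fun i => i.elim0⟩

lemma hasWalk_succ : HasWalk E (n + 1) x y ↔ ∃ w, E x w ∧ HasWalk E n w y := by
  constructor
  · rintro ⟨f, h0, hl, hs⟩
    refine ⟨f 1, ?_, f ∘ Fin.succ, ?_, ?_, fun i => ?_⟩
    · have := hs 0
      simpa [h0, Fin.castSucc_zero, Fin.succ_zero_eq_one] using this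
    · simp [Fin.succ_zero_eq_one]
    · simpa [Fin.succ_last] using hl
    · have := hs i.succ
      simpa only [Function.comp_apply, Fin.succ_castSucc] using this
  · rintro ⟨w, hxw, f, h0, hl, hs⟩
    refine ⟨Fin.cons x f, ?_, ?_, fun i => ?_⟩
    · simp
    · rw [← Fin.succ_last, Fin.cons_succ, hl]
    · rw [Fin.cons_succ]
      induction i using Fin.cases with
      | zero =>
        rw [Fin.castSucc_zero, Fin.cons_zero, h0]
        exact hxw
      | succ j =>
        rw [← Fin.succ_castSucc, Fin.cons_succ]
        exact hs j

lemma hasWalk_mono {E' : V → V → Prop} (h : ∀ a b, E a b → E' a b) :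
    ∀ {n x y}, HasWalk E n x y → HasWalk E' n x y := by
  intro n
  induction n with
  | zero => intro x y hw; rw [hasWalk_zero] at *; exact hw
  | succ n ih =>
    intro x y hw
    rw [hasWalk_succ] at *
    obtain ⟨w, hxw, hw⟩ := hw
    exact ⟨w, h _ _ hxw, ih hw⟩

lemma hasWalk_reach : ∀ {n x y}, HasWalk E n x y → Relation.ReflTransGen E x y := by
  intro n
  induction n with
  | zero => intro x y hw; rw [hasWalk_zero] at hw; exact hw ▸ .refl
  | succ n ih =>
    intro x y hw
    rw [hasWalk_succ] at hw
    obtain ⟨w, hxw, hw⟩ := hw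
    exact .head hxw (ih hw)

lemma hasWalk_concat_s7 : ∀ {d d' x z z' y}, HasWalk E d x z → E z z' → HasWalk E d' z' y →
    HasWalk E (d + d' + 1) x y := by
  intro d
  induction d with
  | zero =>
    intro d' x z z' y h1 h2 h3
    rw [hasWalk_zero] at h1
    subst h1
    rw [show 0 + d' + 1 = d' + 1 by omega, hasWalk_succ]
    exact ⟨z', h2, h3⟩
  | succ d ih =>
    intro d' x z z' y h1 h2 h3
    rw [hasWalk_succ] at h1
    obtain ⟨w, hxw, h1⟩ := h1
    rw [show d + 1 + d' + 1 = (d + d' + 1) + 1 by omega, hasWalk_succ]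
    exact ⟨w, hxw, ih h1 h2 h3⟩
end aux

theorem stmt_7 {V : Type*} (E : V → V → Prop)
    (hacyc : ¬ ∃ x, Relation.TransGen E x x) (u v : V) (huv : E u v) :
    ∀ (x y : V) (ℓ : ℕ),
      HasWalk (fun a b => E a b ∧ (a, b) ≠ (u, v)) ℓ x y ↔
        Relation.ReflTransGen E x y ∧
          (((¬ Relation.ReflTransGen E x u ∨ ¬ Relation.ReflTransGen E v y) ∧
              HasWalk E ℓ x y) ∨
            ∃ (z z' : V) (d d' : ℕ), d + d' + 1 = ℓ ∧
              HasWalk E d x z ∧ E z z' ∧ (z, z') ≠ (u, v) ∧ HasWalk E d' z' y ∧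
              Relation.ReflTransGen E z u ∧ ¬ Relation.ReflTransGen E z' u) := by
  set E' : V → V → Prop := fun a b => E a b ∧ (a, b) ≠ (u, v) with hE'
  have hsub : ∀ a b, E' a b → E a b := fun a b h => h.1
  -- key splitting lemma
  have split : ∀ (ℓ : ℕ) (x y : V), HasWalk E' ℓ x y →
      Relation.ReflTransGen E x u → ¬ Relation.ReflTransGen E y u →
      ∃ (z z' : V) (d d' : ℕ), d + d' + 1 = ℓ ∧
        HasWalk E d x z ∧ E z z' ∧ (z, z') ≠ (u, v) ∧ HasWalk E d' z' y ∧
        Relation.ReflTransGen E z u ∧ ¬ Relation.ReflTransGen E z' u := by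
    intro ℓ
    induction ℓ with
    | zero =>
      intro x y hw hxu hyu
      rw [hasWalk_zero] at hw
      exact absurd (hw ▸ hxu) hyu
    | succ n ih =>
      intro x y hw hxu hyu
      rw [hasWalk_succ] at hw
      obtain ⟨w, hxw, hw⟩ := hw
      by_cases hwu : Relation.ReflTransGen E w u
      · obtain ⟨z, z', d, d', hd, h1, h2, h3, h4, h5, h6⟩ := ih w y hw hwu hyu
        refine ⟨z, z', d + 1, d', by omega, ?_, h2, h3, h4, h5, h6⟩
        rw [hasWalk_succ]
        exact ⟨w, hxw.1, h1⟩
      · exact ⟨x, w, 0, n, by omega, hasWalk_zero.mpr rfl, hxw.1, hxw.2,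
          hasWalk_mono hsub hw, hxu, hwu⟩
  -- E-walk avoiding the edge when non-reaching condition holds
  have noedge : ∀ (ℓ : ℕ) (x y : V), HasWalk E ℓ x y →
      (¬ Relation.ReflTransGen E x u ∨ ¬ Relation.ReflTransGen E v y) →
      HasWalk E' ℓ x y := by
    intro ℓ
    induction ℓ with
    | zero =>
      intro x y hw _
      rw [hasWalk_zero] at *; exact hw
    | succ n ih =>
      intro x y hw hcond
      rw [hasWalk_succ] at hw ⊢
      obtain ⟨w, hxw, hw⟩ := hw
      have hne : (x, w) ≠ (u, v) := by
        rintro h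
        rw [Prod.mk.injEq] at h
        obtain ⟨rfl, rfl⟩ := h
        rcases hcond with h | h
        · exact h .refl
        · exact h (hasWalk_reach hw)
      refine ⟨w, ⟨hxw, hne⟩, ih w y hw ?_⟩
      rcases hcond with h | h
      · exact Or.inl fun hwu => h (.head hxw hwu)
      · exact Or.inr h
  -- prefix walk avoids edge (when z reaches u)
  have pre : ∀ (d : ℕ) (x z : V), HasWalk E d x z → Relation.ReflTransGen E z u →
      HasWalk E' d x z := by
    intro d
    induction d with
    | zero => intro x z hw _; rw [hasWalk_zero] at *; exact hw
    | succ n ih =>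
      intro x z hw hzu
      rw [hasWalk_succ] at hw ⊢
      obtain ⟨w, hxw, hw⟩ := hw
      have hne : (x, w) ≠ (u, v) := by
        rintro h
        rw [Prod.mk.injEq] at h
        obtain ⟨rfl, rfl⟩ := h
        exact hacyc ⟨_, Relation.TransGen.head' hxw ((hasWalk_reach hw).trans hzu)⟩
      exact ⟨w, ⟨hxw, hne⟩, ih w z hw hzu⟩
  -- suffix walk avoids edge (when z' does not reach u)
  have post : ∀ (d : ℕ) (z' y : V), HasWalk E d z' y → ¬ Relation.ReflTransGen E z' u →
      HasWalk E' d z' y := by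
    intro d
    induction d with
    | zero => intro z' y hw _; rw [hasWalk_zero] at *; exact hw
    | succ n ih =>
      intro z' y hw hz'u
      rw [hasWalk_succ] at hw ⊢
      obtain ⟨w, hxw, hw⟩ := hw
      have hne : (z', w) ≠ (u, v) := by
        rintro h
        rw [Prod.mk.injEq] at h
        obtain ⟨rfl, rfl⟩ := h
        exact hz'u .refl
      exact ⟨w, ⟨hxw, hne⟩, ih w y hw fun hwu => hz'u (.head hxw hwu)⟩
  intro x y ℓ
  constructor
  · intro hw
    have hreach : Relation.ReflTransGen E x y := hasWalk_reach (hasWalk_mono hsub hw)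
    refine ⟨hreach, ?_⟩
    by_cases hcond : ¬ Relation.ReflTransGen E x u ∨ ¬ Relation.ReflTransGen E v y
    · exact Or.inl ⟨hcond, hasWalk_mono hsub hw⟩
    · push_neg at hcond
      obtain ⟨hxu, hvy⟩ := hcond
      have hyu : ¬ Relation.ReflTransGen E y u := fun hyu =>
        hacyc ⟨u, Relation.TransGen.head' huv (hvy.trans hyu)⟩
      exact Or.inr (split ℓ x y hw hxu hyu)
  · rintro ⟨_, ⟨hcond, hw⟩ | ⟨z, z', d, d', hd, h1, h2, h3, h4, h5, h6⟩⟩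
    · exact noedge ℓ x y hw hcond
    · have := hasWalk_concat_s7 (pre d x z h1 h5) (⟨h2, h3⟩ : E' z z') (post d' z' y h4 h6)
      rwa [hd] at this
end

section
/- Let E be a directed graph on a type V, let u v : V, and let E' be the directed graph with an edge from a to b iff E a b or (a, b) = (u, v). Then for all x y : V and all ℓ : ℕ, there is a walk of length ℓ from x to y in E' if and only if there is a walk of length ℓ from x to y in E, or there exist k : ℕ with k ≥ 1 and d : Fin (k+1) → ℕ such that k + ∑ j, d j = ℓ, there is a walk of length d 0 from x to u in E, there is a walk of length d k from v to y in E, and for every j with 1 ≤ j ≤ k − 1 there is a walk of length d j from v to u in E. -/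
def W {V : Type*} (E : V → V → Prop) (n : ℕ) (x y : V) : Prop :=
  ∃ f : ℕ → V, f 0 = x ∧ f n = y ∧ ∀ i < n, E (f i) (f (i+1))

theorem hasWalk_iff_W {V : Type*} (E : V → V → Prop) (n : ℕ) (x y : V) :
    HasWalk E n x y ↔ W E n x y := by
  constructor
  · rintro ⟨f, h0, hl, he⟩
    refine ⟨fun i => f ⟨min i n, by omega⟩, ?_, ?_, ?_⟩
    · simpa using h0
    · simpa [Fin.last] using hl
    · intro i hi
      dsimp only
      have := he ⟨i, hi⟩
      convert this using 2 <;> · ext; simp; omega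
  · rintro ⟨f, h0, hl, he⟩
    exact ⟨fun i => f i.val, h0, hl, fun i => he i.val i.isLt⟩

theorem W_zero {V : Type*} (E : V → V → Prop) (x y : V) : W E 0 x y ↔ x = y := by
  constructor
  · rintro ⟨f, h0, hl, _⟩; rw [← h0, ← hl]
  · rintro rfl; exact ⟨fun _ => x, rfl, rfl, by omega⟩

theorem W_succ {V : Type*} (E : V → V → Prop) (n : ℕ) (x y : V) :
    W E (n+1) x y ↔ ∃ z, E x z ∧ W E n z y := by
  constructor
  · rintro ⟨f, h0, hl, he⟩
    exact ⟨f 1, h0 ▸ he 0 (by omega), fun i => f (i+1), rfl, hl, fun i hi => he (i+1) (by omega)⟩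
  · rintro ⟨z, hxz, f, h0, hl, he⟩
    refine ⟨fun i => if i = 0 then x else f (i-1), rfl, by simp [hl], ?_⟩
    intro i hi
    rcases Nat.eq_zero_or_pos i with rfl | hpos
    · simpa [h0] using hxz
    · have h1 : ¬ i = 0 := by omega
      have h2 : ¬ i + 1 = 0 := by omega
      simp only [h1, h2, if_false]
      have := he (i-1) (by omega)
      have : i + 1 - 1 = i - 1 + 1 := by omega
      rw [this]
      exact he (i-1) (by omega)

theorem W_concat {V : Type*} {E : V → V → Prop} {m n : ℕ} {x z y : V}
    (h1 : W E m x z) (h2 : W E n z y) : W E (m + n) x y := by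
  obtain ⟨f, hf0, hfl, hfe⟩ := h1
  obtain ⟨g, hg0, hgl, hge⟩ := h2
  refine ⟨fun i => if i < m then f i else g (i - m), ?_, ?_, ?_⟩
  · rcases Nat.eq_zero_or_pos m with rfl | h
    · simp only [if_neg (by omega : ¬ (0:ℕ) < 0)]
      rw [Nat.sub_zero, hg0, ← hfl, hf0]
    · simp [h, hf0]
  · simp only [if_neg (by omega : ¬ m + n < m)]
    simpa using hgl
  · intro i hi
    dsimp only
    by_cases h' : i + 1 < m
    · rw [if_pos (by omega : i < m), if_pos h']
      exact hfe i (by omega)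
    · by_cases h'' : i < m
      · rw [if_pos h'', if_neg (by omega : ¬ i + 1 < m)]
        have e1 : i + 1 - m = 0 := by omega
        rw [e1, hg0, ← hfl]
        have e2 : m = i + 1 := by omega
        rw [e2]
        exact hfe i (by omega)
      · rw [if_neg (by omega : ¬ i < m), if_neg (by omega : ¬ i + 1 < m)]
        have e : i + 1 - m = i - m + 1 := by omega
        rw [e]
        exact hge (i - m) (by omega)

theorem W_congr {V : Type*} {E : V → V → Prop} {m n : ℕ} {x y : V}
    (h : m = n) (hw : W E m x y) : W E n x y := h ▸ hw

theorem W_mono {V : Type*} {E E' : V → V → Prop} (h : ∀ a b, E a b → E' a b)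
    {n : ℕ} {x y : V} : W E n x y → W E' n x y := by
  rintro ⟨f, h0, hl, he⟩; exact ⟨f, h0, hl, fun i hi => h _ _ (he i hi)⟩

theorem back {V : Type*} (E : V → V → Prop) (u v y : V) :
    ∀ k, 1 ≤ k → ∀ x (d : Fin (k+1) → ℕ),
      W E (d 0) x u → W E (d (Fin.last k)) v y →
      (∀ j : Fin (k+1), 1 ≤ (j:ℕ) → (j:ℕ) ≤ k-1 → W E (d j) v u) →
      W (fun a b => E a b ∨ (a, b) = (u, v)) (k + ∑ j, d j) x y := by
  have mono : ∀ a b, E a b → (E a b ∨ (a, b) = (u, v)) := fun a b h => Or.inl h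
  have edge : W (fun a b => E a b ∨ (a, b) = (u, v)) 1 u v :=
    (W_succ _ _ _ _).mpr ⟨v, Or.inr rfl, (W_zero _ _ _).mpr rfl⟩
  intro k hk
  induction k, hk using Nat.le_induction with
  | base =>
    intro x d h1 h2 _
    have := W_concat (W_concat (W_mono mono h1) edge) (W_mono mono h2)
    apply W_congr _ this
    have hl : d (Fin.last 1) = d 1 := rfl
    rw [Fin.sum_univ_two, hl]
    omega
  | succ k hk ih =>
    intro x d h1 h2 h3
    have h01 : (0 : Fin (k+1)).succ = 1 := by ext; simp
    have hd1 : W E (Fin.tail d 0) v u := by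
      rw [Fin.tail, h01]
      apply h3 1
      · simp
      · simp; omega
    have htl : W E (Fin.tail d (Fin.last k)) v y := by
      rw [Fin.tail, Fin.succ_last]; exact h2
    have hint : ∀ j : Fin (k+1), 1 ≤ (j:ℕ) → (j:ℕ) ≤ k-1 → W E (Fin.tail d j) v u := by
      intro j hj1 hj2
      exact h3 j.succ (by simp) (by simp [Fin.val_succ]; omega)
    have tail := ih v (Fin.tail d) hd1 htl hint
    have := W_concat (W_concat (W_mono mono h1) edge) tail
    apply W_congr _ this
    have hs : ∑ j, d j = d 0 + ∑ i : Fin (k+1), Fin.tail d i := Fin.sum_univ_succ d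
    omega

theorem fwd {V : Type*} (E : V → V → Prop) (u v y : V) :
    ∀ (ℓ : ℕ) (x : V), W (fun a b => E a b ∨ (a, b) = (u, v)) ℓ x y →
      W E ℓ x y ∨
        ∃ k : ℕ, 1 ≤ k ∧ ∃ d : Fin (k + 1) → ℕ,
          k + ∑ j, d j = ℓ ∧ W E (d 0) x u ∧ W E (d (Fin.last k)) v y ∧
          ∀ j : Fin (k + 1), 1 ≤ (j : ℕ) → (j : ℕ) ≤ k - 1 → W E (d j) v u := by
  intro ℓ
  induction ℓ with
  | zero =>
    intro x h
    left
    rw [W_zero] at h ⊢; exact h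
  | succ n ih =>
    intro x h
    rw [W_succ] at h
    obtain ⟨z, hz, hw⟩ := h
    rcases hz with hz | hz
    · rcases ih z hw with hw' | ⟨k, hk, d, hsum, h1, h2, h3⟩
      · left; exact (W_succ _ _ _ _).mpr ⟨z, hz, hw'⟩
      · right
        refine ⟨k, hk, Function.update d 0 (d 0 + 1), ?_, ?_, ?_, ?_⟩
        · have hs := Finset.sum_update_of_mem (Finset.mem_univ (0 : Fin (k+1))) d (d 0 + 1)
          have hs2 := Finset.sum_eq_add_sum_sdiff_singleton_of_mem (Finset.mem_univ (0 : Fin (k+1))) d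
          rw [hs]
          omega
        · rw [Function.update_self]
          exact (W_succ _ _ _ _).mpr ⟨z, hz, h1⟩
        · rw [Function.update_of_ne (by simp [Fin.ext_iff]; omega : Fin.last k ≠ 0)]
          exact h2
        · intro j hj1 hj2
          rw [Function.update_of_ne (by intro h; rw [Fin.ext_iff, Fin.val_zero] at h; omega : j ≠ 0)]
          exact h3 j hj1 hj2
    · rw [Prod.mk.injEq] at hz
      obtain ⟨hxu, hzv⟩ := hz
      rw [hzv] at hw
      rcases ih v hw with hw' | ⟨k, hk, d, hsum, h1, h2, h3⟩
      · right
        refine ⟨1, le_refl 1, ![0, n], ?_, ?_, ?_, ?_⟩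
        · simp [Fin.sum_univ_two]; omega
        · exact (W_zero _ _ _).mpr hxu
        · exact hw'
        · intro j hj1 hj2; omega
      · right
        refine ⟨k + 1, by omega, Fin.cons 0 d, ?_, ?_, ?_, ?_⟩
        · rw [Fin.sum_cons]; omega
        · rw [Fin.cons_zero]; exact (W_zero _ _ _).mpr hxu
        · rw [← Fin.succ_last, Fin.cons_succ]; exact h2
        · intro j hj1 hj2
          induction j using Fin.cases with
          | zero => simp at hj1
          | succ i =>
            rw [Fin.cons_succ]
            by_cases hi : (i : ℕ) = 0
            · have : i = 0 := by ext; exact hi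
              rw [this]; exact h1
            · apply h3 i (by omega)
              have := i.isLt
              simp [Fin.val_succ] at hj2
              omega

theorem stmt_8 {V : Type*} (E : V → V → Prop) (u v : V) :
    ∀ (x y : V) (ℓ : ℕ),
      HasWalk (fun a b => E a b ∨ (a, b) = (u, v)) ℓ x y ↔
        HasWalk E ℓ x y ∨
          ∃ k : ℕ, 1 ≤ k ∧ ∃ d : Fin (k + 1) → ℕ,
            k + ∑ j, d j = ℓ ∧
            HasWalk E (d 0) x u ∧
            HasWalk E (d (Fin.last k)) v y ∧
            ∀ j : Fin (k + 1), 1 ≤ (j : ℕ) → (j : ℕ) ≤ k - 1 → HasWalk E (d j) v u := by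
  intro x y ℓ
  simp only [hasWalk_iff_W]
  constructor
  · exact fwd E u v y ℓ x
  · rintro (h | ⟨k, hk, d, hsum, h1, h2, h3⟩)
    · exact W_mono (fun a b => Or.inl) h
    · exact W_congr hsum (back E u v y k hk x d h1 h2 h3)
end

section
/- Let Σ be a type, let Q be a finite type, let M : DFA Σ Q be a deterministic finite automaton, let E be a Σ-labeled directed graph on a type V, let p q : Q and x y : V. If there is a word w : List Σ with M.evalFrom p w = q and a walk from x to y labeled w in E, then there is a word w' : List Σ with M.evalFrom p w' = q and a walk f' from x to y labeled w' in E such that the number of indices i : Fin (w'.length + 1) with f' i = x is at most Fintype.card Q. -/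
/-- There is a walk from `x` to `y` labeled `w` in the labeled directed graph `E`. -/
def HasLabeledWalk {V Γ : Type*} (E : V → Γ → V → Prop) (w : List Γ) (x y : V) : Prop :=
  ∃ f : Fin (w.length + 1) → V, f 0 = x ∧ f (Fin.last w.length) = y ∧
    ∀ i : Fin w.length, E (f i.castSucc) (w.get i) (f i.succ)

open Finset in
open scoped Classical in
private lemma stmt_10_aux {Γ Q V : Type*} [Fintype Q] (M : DFA Γ Q)
    (E : V → Γ → V → Prop) (p q : Q) (x y : V) :
    ∀ n (w : List Γ) (hw : w.length = n), ∀ g : ℕ → V, g 0 = x → g n = y →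
    (∀ k, (hk : k < n) → E (g k) (w[k]'(by omega)) (g (k+1))) → M.evalFrom p w = q →
    ∃ (w' : List Γ) (g' : ℕ → V), M.evalFrom p w' = q ∧ g' 0 = x ∧ g' w'.length = y ∧
      (∀ k, (hk : k < w'.length) → E (g' k) (w'[k]) (g' (k+1))) ∧
      ((Finset.range (w'.length + 1)).filter (fun k => g' k = x)).card ≤ Fintype.card Q := by
  intro n
  induction n using Nat.strong_induction_on with
  | _ n IH =>
    intro w hw g hg0 hgn hedge heval
    by_cases hcard : ((range (n+1)).filter (fun k => g k = x)).card ≤ Fintype.card Q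
    · refine ⟨w, g, heval, hg0, by rwa [hw], ?_, by rwa [hw]⟩
      intro k hk
      exact hedge k (by omega)
    · push_neg at hcard
      obtain ⟨i, hi, j, hj, hij, hstate⟩ :=
        Finset.exists_ne_map_eq_of_card_lt_of_maps_to
          (t := (Finset.univ : Finset Q)) (by simpa using hcard)
          (fun a _ => Finset.mem_univ (M.evalFrom p (w.take a)))
      wlog hlt : i < j generalizing i j
      · exact this j hj i hi hij.symm hstate.symm (by omega)
      simp only [mem_filter, mem_range] at hi hj
      set d := j - i with hd
      have hd0 : 0 < d := by omega
      have hjn : j ≤ n := by omega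
      have hin : i ≤ n := by omega
      have hidj : i + d = j := by omega
      have hlen : (w.take i ++ w.drop j).length = n - d := by
        simp [hw]; omega
      set g'' : ℕ → V := fun k => if k < i then g k else g (k + d) with hg''
      have hle : ∀ k ≤ i, g'' k = g k := by
        intro k hk
        rcases lt_or_eq_of_le hk with h | h
        · simp [hg'', h]
        · subst h
          simp only [hg'', if_neg (lt_irrefl _), hidj, hj.2, hi.2]
      have hge : ∀ k, i ≤ k → g'' k = g (k + d) := by
        intro k hk
        rcases lt_or_eq_of_le hk with h | h
        · simp [hg'', not_lt.mpr (le_of_lt h)]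
        · subst h
          rw [hle _ le_rfl, hi.2, hidj, hj.2]
      have hedge'' : ∀ k, (hk : k < n - d) →
          E (g'' k) ((w.take i ++ w.drop j)[k]'(by omega)) (g'' (k+1)) := by
        intro k hk
        rcases lt_or_ge k i with h | h
        · have hki : k < (w.take i).length := by simp [hw]; omega
          rw [List.getElem_append_left hki, List.getElem_take,
            hle k (le_of_lt h), hle (k+1) (by omega)]
          exact hedge k (by omega)
        · have hki : (w.take i).length ≤ k := by simp [hw]; omega
          have h1 : k - (w.take i).length = k - i := by simp [hw]; omega
          have h2 : k - i < (w.drop j).length := by simp [hw]; omega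
          rw [List.getElem_append_right hki, hge k h, hge (k+1) (by omega)]
          rw [List.getElem_drop]
          simp only [List.length_take, hw, min_eq_left hin]
          have harg : j + (k - i) = k + d := by omega
          simp only [harg]
          have := hedge (k + d) (by omega)
          convert this using 2
          omega
      have heval'' : M.evalFrom p (w.take i ++ w.drop j) = q := by
        rw [DFA.evalFrom_of_append, hstate, ← DFA.evalFrom_of_append,
          List.take_append_drop, heval]
      refine IH (n - d) (by omega) _ hlen g'' ?_ ?_ hedge'' heval''
      · rcases Nat.eq_zero_or_pos i with h | h
        · rw [hge 0 (by omega), zero_add]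
          have : d = j := by omega
          rw [this, hj.2]
        · rw [hle 0 (by omega), hg0]
      · rw [hge (n - d) (by omega)]
        have : n - d + d = n := by omega
        rw [this, hgn]

theorem stmt_10 {Γ Q V : Type*} [Fintype Q] (M : DFA Γ Q)
    (E : V → Γ → V → Prop) (p q : Q) (x y : V)
    (h : ∃ w : List Γ, M.evalFrom p w = q ∧ HasLabeledWalk E w x y) :
    ∃ (w' : List Γ) (f' : Fin (w'.length + 1) → V),
      M.evalFrom p w' = q ∧
      f' 0 = x ∧ f' (Fin.last w'.length) = y ∧
      (∀ i : Fin w'.length, E (f' i.castSucc) (w'.get i) (f' i.succ)) ∧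
      Nat.card {i : Fin (w'.length + 1) // f' i = x} ≤ Fintype.card Q := by
  classical
  obtain ⟨w, heval, f, hf0, hfl, hfe⟩ := h
  have hg0 : (fun k => f ⟨min k w.length, by omega⟩ : ℕ → V) 0 = x := by
    convert hf0 using 2
    exact Fin.ext (by simp)
  have hgn : (fun k => f ⟨min k w.length, by omega⟩ : ℕ → V) w.length = y := by
    convert hfl using 2
    exact Fin.ext (by simp [Fin.last])
  have hedge : ∀ k, (hk : k < w.length) →
      E ((fun k => f ⟨min k w.length, by omega⟩ : ℕ → V) k) (w[k]'(by omega))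
        ((fun k => f ⟨min k w.length, by omega⟩ : ℕ → V) (k+1)) := by
    intro k hk
    have := hfe ⟨k, hk⟩
    simp only [List.get_eq_getElem] at this
    convert this using 2 <;> · apply Fin.ext; simp; omega
  obtain ⟨w', g', heval', hg0', hgl', hedge', hcount⟩ :=
    stmt_10_aux M E p q x y w.length w rfl _ hg0 hgn hedge heval
  refine ⟨w', fun i => g' i, heval', by simpa using hg0', by simpa [Fin.last] using hgl', ?_, ?_⟩
  · intro i
    have := hedge' i.val i.isLt
    simpa [Fin.castSucc, Fin.succ, List.get_eq_getElem] using this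
  · set S := (Finset.range (w'.length + 1)).filter (fun k => g' k = x) with hS
    have : Nat.card {i : Fin (w'.length + 1) // g' i.val = x} ≤ Nat.card {k // k ∈ S} := by
      refine Nat.card_le_card_of_injective
        (fun i => ⟨i.1.val, by simp [hS, Finset.mem_filter, Finset.mem_range, i.1.isLt, i.2]⟩) ?_
      intro a b hab
      simp only [Subtype.mk.injEq] at hab
      exact Subtype.ext (Fin.ext hab)
    calc Nat.card {i : Fin (w'.length + 1) // g' i.val = x} ≤ Nat.card {k // k ∈ S} := this
      _ = S.card := by rw [Nat.card_eq_fintype_card, Fintype.card_coe]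
      _ ≤ Fintype.card Q := hcount
end

section
/- Let Σ be a type and let E be a Σ-labeled directed graph on a type V. Define the directed graph R on V × V by: R (a, b) (a', b') iff there exists σ : Σ with E a σ a' and E b' σ b. Then for all x y : V, there exists a word w : List Σ and a walk from x to y labeled w ++ w.reverse in E if and only if there exists z : V such that (z, z) is reachable from (x, y) in R. -/
inductive LWalk {V Γ : Type*} (E : V → Γ → V → Prop) : List Γ → V → V → Prop
  | nil (x : V) : LWalk E [] x x
  | cons {σ : Γ} {w : List Γ} {x a y : V} :
      E x σ a → LWalk E w a y → LWalk E (σ :: w) x y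

lemma lwalk_of_hasLabeledWalk {V Γ : Type*} {E : V → Γ → V → Prop} :
    ∀ {w : List Γ} {x y : V}, HasLabeledWalk E w x y → LWalk E w x y := by
  intro w
  induction w with
  | nil =>
    rintro x y ⟨f, h0, hl, _⟩
    have : x = y := by rw [← h0, ← hl]; rfl
    subst this; exact LWalk.nil x
  | cons σ w ih =>
    rintro x y ⟨f, h0, hl, he⟩
    simp only [List.length_cons] at f h0 hl he
    have h1 : E x σ (f 1) := by
      have := he (0 : Fin (w.length + 1))
      simpa [h0] using this
    refine LWalk.cons h1 (ih ⟨fun i => f i.succ, rfl, ?_, ?_⟩)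
    · show f (Fin.last w.length).succ = y
      rw [Fin.succ_last]
      exact hl
    · intro i
      have := he i.succ
      simpa using this

lemma hasLabeledWalk_of_lwalk {V Γ : Type*} {E : V → Γ → V → Prop}
    {w : List Γ} {x y : V} (h : LWalk E w x y) : HasLabeledWalk E w x y := by
  induction h with
  | nil x => exact ⟨fun _ => x, rfl, rfl, fun i => i.elim0⟩
  | @cons σ w x a y hE _ ih =>
    obtain ⟨g, h0, hl, he⟩ := ih
    simp only [HasLabeledWalk, List.length_cons]
    refine ⟨Fin.cases x g, by simp, ?_, ?_⟩
    · show Fin.cases x g (Fin.last w.length).succ = y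
      rw [Fin.cases_succ]; exact hl
    · intro i
      induction i using Fin.cases with
      | zero =>
        show E (Fin.cases x g (0 : Fin (w.length + 1)).castSucc) σ
          (Fin.cases x g ((0 : Fin (w.length + 1)) : Fin (w.length + 1)).succ)
        rw [Fin.castSucc_zero, Fin.cases_zero, Fin.cases_succ, h0]
        exact hE
      | succ j =>
        show E (Fin.cases x g j.succ.castSucc) (w.get j) (Fin.cases x g j.succ.succ)
        rw [← Fin.succ_castSucc, Fin.cases_succ, Fin.cases_succ]
        exact he j

lemma lwalk_append {V Γ : Type*} {E : V → Γ → V → Prop}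
    {u v : List Γ} {x m y : V} (h1 : LWalk E u x m) (h2 : LWalk E v m y) :
    LWalk E (u ++ v) x y := by
  induction h1 with
  | nil => simpa using h2
  | cons hE _ ih => exact LWalk.cons hE (ih h2)

lemma lwalk_append_split {V Γ : Type*} {E : V → Γ → V → Prop} :
    ∀ {u v : List Γ} {x y : V}, LWalk E (u ++ v) x y →
      ∃ m, LWalk E u x m ∧ LWalk E v m y := by
  intro u
  induction u with
  | nil => exact fun h => ⟨_, LWalk.nil _, h⟩
  | cons σ u ih =>
    intro v x y h
    cases h with
    | cons hE h' =>
      obtain ⟨m, hm1, hm2⟩ := ih h'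
      exact ⟨m, LWalk.cons hE hm1, hm2⟩

lemma lwalk_single {V Γ : Type*} {E : V → Γ → V → Prop} {σ : Γ} {x y : V}
    (h : LWalk E [σ] x y) : E x σ y := by
  cases h with
  | cons hE h' => cases h'; exact hE

lemma forward_aux {V Γ : Type*} {E : V → Γ → V → Prop} {w : List Γ} {x z : V}
    (h1 : LWalk E w x z) :
    ∀ {y : V}, LWalk E w.reverse z y →
      Relation.ReflTransGen
        (fun a b : V × V => ∃ σ : Γ, E a.1 σ b.1 ∧ E b.2 σ a.2) (x, y) (z, z) := by
  induction h1 with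
  | nil x =>
    intro y h2
    cases h2
    exact Relation.ReflTransGen.refl
  | @cons σ w x a z hE _ ih =>
    intro y h2
    rw [List.reverse_cons] at h2
    obtain ⟨m, hm1, hm2⟩ := lwalk_append_split h2
    have hmy : E m σ y := lwalk_single hm2
    exact Relation.ReflTransGen.head ⟨σ, hE, hmy⟩ (ih hm1)

theorem stmt_12 {Γ V : Type*} (E : V → Γ → V → Prop) :
    ∀ x y : V,
      (∃ w : List Γ, HasLabeledWalk E (w ++ w.reverse) x y) ↔
        ∃ z : V,
          Relation.ReflTransGen
            (fun a b : V × V => ∃ σ : Γ, E a.1 σ b.1 ∧ E b.2 σ a.2)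
            (x, y) (z, z) := by
  intro x y
  constructor
  · rintro ⟨w, hw⟩
    obtain ⟨z, h1, h2⟩ := lwalk_append_split (lwalk_of_hasLabeledWalk hw)
    exact ⟨z, forward_aux h1 h2⟩
  · rintro ⟨z, hz⟩
    have key : ∀ p : V × V,
        Relation.ReflTransGen
          (fun a b : V × V => ∃ σ : Γ, E a.1 σ b.1 ∧ E b.2 σ a.2) p (z, z) →
        ∃ w : List Γ, LWalk E (w ++ w.reverse) p.1 p.2 := by
      intro p hp
      induction hp using Relation.ReflTransGen.head_induction_on with
      | refl => exact ⟨[], LWalk.nil z⟩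
      | head hab _ ih =>
        obtain ⟨σ, h1, h2⟩ := hab
        obtain ⟨w, hw⟩ := ih
        refine ⟨σ :: w, ?_⟩
        have : LWalk E (σ :: ((w ++ w.reverse) ++ [σ])) _ _ :=
          LWalk.cons h1 (lwalk_append hw (LWalk.cons h2 (LWalk.nil _)))
        simpa [List.append_assoc] using this
    obtain ⟨w, hw⟩ := key (x, y) hz
    exact ⟨w, hasLabeledWalk_of_lwalk hw⟩
end

section
/- Let m k : ℕ, let E i (for i : Fin m) be directed graphs on types V i, and let A : Fin k → Fin m → Bool be a list of transition rules. Define the generalized product directed graph R on Π i, V i by: R x y iff there exists j : Fin k such that for every i : Fin m, if A j i = true then E i (x i) (y i), and if A j i = false then x i = y i. Then for all x y : Π i, V i, y is reachable from x in R if and only if there exists n : Fin k → ℕ such that for every i : Fin m there is a walk from x i to y i in E i of length ∑ j, (n j) * (if A j i then 1 else 0). -/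
section Aux

variable {V : Type*} {E : V → V → Prop}

lemma hasWalk_zero_iff {x y : V} : HasWalk E 0 x y ↔ x = y := by
  constructor
  · rintro ⟨f, h0, hl, _⟩
    rw [← h0, ← hl]
    exact congrArg f (Fin.ext (by simp [Fin.last]))
  · rintro rfl
    exact ⟨fun _ => x, rfl, rfl, fun i => i.elim0⟩

lemma hasWalk_one_iff {x y : V} : HasWalk E 1 x y ↔ E x y := by
  constructor
  · rintro ⟨f, h0, hl, he⟩
    have h := he 0
    rw [← h0, ← hl]
    exact h
  · intro h
    refine ⟨![x, y], rfl, rfl, fun i => ?_⟩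
    fin_cases i
    simpa using h

lemma hasWalk_add {a b : ℕ} {x y : V} (h : HasWalk E (a + b) x y) :
    ∃ z, HasWalk E a x z ∧ HasWalk E b z y := by
  obtain ⟨f, h0, hl, he⟩ := h
  refine ⟨f ⟨a, by omega⟩,
    ⟨fun i => f ⟨i, by omega⟩, ?_, ?_, ?_⟩,
    ⟨fun i => f ⟨a + i, by omega⟩, ?_, ?_, ?_⟩⟩
  · rw [← h0]; congr 1
  · rfl
  · intro i
    have := he ⟨i, by omega⟩
    convert this using 2 <;> rfl
  · congr 1
  · rw [← hl]; congr 1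
  · intro i
    have := he ⟨a + i, by omega⟩
    convert this using 2 <;> rfl

lemma hasWalk_succ_s13 {n : ℕ} {x y z : V} (h : HasWalk E n x y) (hE : E y z) :
    HasWalk E (n + 1) x z := by
  obtain ⟨f, h0, hl, he⟩ := h
  refine ⟨fun i => if hi : (i : ℕ) ≤ n then f ⟨i, by omega⟩ else z, ?_, ?_, ?_⟩
  · simpa using h0
  · simp [Fin.last]
  · intro i
    by_cases hi : (i : ℕ) < n
    · have := he ⟨i, hi⟩
      simp only [Fin.coe_castSucc, Fin.val_succ]
      rw [dif_pos (by omega), dif_pos (by omega)]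
      convert this using 2 <;> rfl
    · have hin : (i : ℕ) = n := by omega
      simp only [Fin.coe_castSucc, Fin.val_succ]
      rw [dif_pos (by omega), dif_neg (by omega)]
      have : f ⟨(i : ℕ), by omega⟩ = y := by
        rw [← hl]; congr 1; ext; simp [hin, Fin.last]
      rw [this]; exact hE

end Aux

lemma reach_single {m k : ℕ} {V : Fin m → Type*} (E : ∀ i, V i → V i → Prop)
    (A : Fin k → Fin m → Bool) (j : Fin k) (c : ℕ) :
    ∀ x y : ∀ i, V i,
      (∀ i, HasWalk (E i) (c * (if A j i then 1 else 0)) (x i) (y i)) →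
      Relation.ReflTransGen
        (fun a b : ∀ i, V i => ∃ j : Fin k, ∀ i : Fin m,
          (A j i = true → E i (a i) (b i)) ∧ (A j i = false → a i = b i)) x y := by
  induction c with
  | zero =>
    intro x y h
    have hxy : x = y := funext fun i => hasWalk_zero_iff.mp (by simpa using h i)
    exact hxy ▸ Relation.ReflTransGen.refl
  | succ c ih =>
    intro x y h
    have h' : ∀ i, ∃ z, HasWalk (E i) (c * (if A j i then 1 else 0)) (x i) z ∧
        HasWalk (E i) (if A j i then 1 else 0) z (y i) := by
      intro i
      have := h i
      rw [Nat.succ_mul] at this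
      exact hasWalk_add this
    choose z hz1 hz2 using h'
    refine Relation.ReflTransGen.tail (ih x z hz1) ⟨j, fun i => ?_⟩
    by_cases hA : A j i = true
    · refine ⟨fun _ => ?_, fun hf => by simp [hA] at hf⟩
      have := hz2 i
      rw [if_pos hA] at this
      exact hasWalk_one_iff.mp this
    · refine ⟨fun ht => absurd ht hA, fun _ => ?_⟩
      have := hz2 i
      rw [if_neg hA] at this
      exact hasWalk_zero_iff.mp this

lemma reach_finset {m k : ℕ} {V : Fin m → Type*} (E : ∀ i, V i → V i → Prop)
    (A : Fin k → Fin m → Bool) (n : Fin k → ℕ) (s : Finset (Fin k)) :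
    ∀ x y : ∀ i, V i,
      (∀ i, HasWalk (E i) (∑ j ∈ s, n j * (if A j i then 1 else 0)) (x i) (y i)) →
      Relation.ReflTransGen
        (fun a b : ∀ i, V i => ∃ j : Fin k, ∀ i : Fin m,
          (A j i = true → E i (a i) (b i)) ∧ (A j i = false → a i = b i)) x y := by
  induction s using Finset.induction_on with
  | empty =>
    intro x y h
    have hxy : x = y := funext fun i => hasWalk_zero_iff.mp (by simpa using h i)
    exact hxy ▸ Relation.ReflTransGen.refl
  | @insert j s hjs ih =>
    intro x y h
    have h' : ∀ i, ∃ z, HasWalk (E i) (n j * (if A j i then 1 else 0)) (x i) z ∧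
        HasWalk (E i) (∑ j' ∈ s, n j' * (if A j' i then 1 else 0)) z (y i) := by
      intro i
      have := h i
      rw [Finset.sum_insert hjs] at this
      exact hasWalk_add this
    choose z hz1 hz2 using h'
    exact (reach_single E A j (n j) x z hz1).trans (ih z y hz2)

theorem stmt_13 {m k : ℕ} {V : Fin m → Type*} (E : ∀ i, V i → V i → Prop)
    (A : Fin k → Fin m → Bool) :
    ∀ x y : ∀ i, V i,
      Relation.ReflTransGen
          (fun a b : ∀ i, V i => ∃ j : Fin k, ∀ i : Fin m,
            (A j i = true → E i (a i) (b i)) ∧ (A j i = false → a i = b i))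
          x y ↔
        ∃ n : Fin k → ℕ, ∀ i : Fin m,
          HasWalk (E i) (∑ j, n j * (if A j i then 1 else 0)) (x i) (y i) := by
  intro x y
  constructor
  · intro h
    induction h with
    | refl =>
      exact ⟨fun _ => 0, fun i => by simpa using hasWalk_zero_iff.mpr (rfl : x i = x i)⟩
    | @tail b c hxb hbc ih =>
      obtain ⟨n, hn⟩ := ih
      obtain ⟨j, hj⟩ := hbc
      refine ⟨fun j' => n j' + if j' = j then 1 else 0, fun i => ?_⟩
      have hsum : ∑ j', (n j' + if j' = j then 1 else 0) * (if A j' i then 1 else 0)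
          = (∑ j', n j' * (if A j' i then 1 else 0)) + (if A j i then 1 else 0) := by
        rw [Finset.sum_congr rfl (fun j' _ => add_mul _ _ _), Finset.sum_add_distrib]
        congr 1
        rw [Finset.sum_eq_single j]
        · simp
        · intro b _ hb
          simp [hb]
        · simp
      rw [hsum]
      by_cases hA : A j i = true
      · rw [if_pos hA]
        exact hasWalk_succ_s13 (hn i) ((hj i).1 hA)
      · rw [if_neg hA]
        have heq : b i = c i := (hj i).2 (by simpa using hA)
        rw [Nat.add_zero]
        exact heq ▸ hn i
  · rintro ⟨n, hn⟩
    exact reach_finset E A n Finset.univ x y hn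
end

section
/- Let E be a directed graph on a type V and let N : ℕ. Define the directed graph R on V × ℕ by: R (a, i) (b, j) iff E a b, j = i + 1, and j ≤ N. Then for all x y : V and all ℓ : ℕ, (y, ℓ) is reachable from (x, 0) in R if and only if ℓ ≤ N and there is a walk of length ℓ from x to y in E. -/
theorem stmt_14 {V : Type*} (E : V → V → Prop) (N : ℕ) :
    ∀ (x y : V) (ℓ : ℕ),
      Relation.ReflTransGen
          (fun a b : V × ℕ => E a.1 b.1 ∧ b.2 = a.2 + 1 ∧ b.2 ≤ N)
          (x, 0) (y, ℓ) ↔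
        ℓ ≤ N ∧ HasWalk E ℓ x y := by
  intro x y ℓ
  constructor
  · intro h
    have key : ∀ p : V × ℕ,
        Relation.ReflTransGen
          (fun a b : V × ℕ => E a.1 b.1 ∧ b.2 = a.2 + 1 ∧ b.2 ≤ N)
          (x, 0) p → p.2 ≤ N ∧ HasWalk E p.2 x p.1 := by
      intro p hp
      induction hp with
      | refl =>
        refine ⟨Nat.zero_le _, fun _ => x, rfl, rfl, fun i => i.elim0⟩
      | tail _ hstep ih =>
        rename_i b c _
        obtain ⟨hE, hsucc, hle⟩ := hstep
        obtain ⟨_, f, hf0, hflast, hfstep⟩ := ih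
        refine ⟨hle, ?_⟩
        rw [hsucc]
        refine ⟨Fin.snoc f c.1, ?_, ?_, ?_⟩
        · rw [show (0 : Fin (b.2+2)) = (0 : Fin (b.2+1)).castSucc from rfl,
            Fin.snoc_castSucc, hf0]
        · simp
        · intro i
          refine Fin.lastCases ?_ ?_ i
          · have h1 : (Fin.snoc f c.1 : Fin (b.2+2) → V) (Fin.last b.2).castSucc = f (Fin.last b.2) := by
              simp
            have h2 : (Fin.snoc f c.1 : Fin (b.2+2) → V) (Fin.last b.2).succ = c.1 := by
              rw [show (Fin.last b.2).succ = Fin.last (b.2+1) from rfl]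
              simp
            rw [h1, h2, hflast]; exact hE
          · intro j
            have h1 : (Fin.snoc f c.1 : Fin (b.2+2) → V) j.castSucc.castSucc = f j.castSucc := by
              simp
            have h2 : (Fin.snoc f c.1 : Fin (b.2+2) → V) j.castSucc.succ = f j.succ := by
              rw [show j.castSucc.succ = j.succ.castSucc from rfl]
              rw [Fin.snoc_castSucc]
            rw [h1, h2]; exact hfstep j
    exact key (y, ℓ) h
  · rintro ⟨hle, f, hf0, hflast, hfstep⟩
    have key : ∀ k : ℕ, ∀ hk : k ≤ ℓ,
        Relation.ReflTransGen
          (fun a b : V × ℕ => E a.1 b.1 ∧ b.2 = a.2 + 1 ∧ b.2 ≤ N)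
          (x, 0) (f ⟨k, by omega⟩, k) := by
      intro k
      induction k with
      | zero => intro _; rw [show f ⟨0, by omega⟩ = x from hf0]
      | succ n ih =>
        intro hn
        refine (ih (by omega)).tail ⟨?_, rfl, by omega⟩
        exact hfstep ⟨n, by omega⟩
    have := key ℓ le_rfl
    rwa [show (⟨ℓ, by omega⟩ : Fin (ℓ + 1)) = Fin.last ℓ from rfl, hflast] at this
end

section
/- Let G be a context-free grammar (Mathlib's ContextFreeGrammar) in Chomsky normal form, i.e. every rule of G has right-hand side either [Symbol.nonterminal B, Symbol.nonterminal C] for nonterminals B, C or [Symbol.terminal a] for a terminal a. Suppose X, Y₁, Y₂ are nonterminals and s₁, s₂, s₃ are terminal strings such that G.Derives [Symbol.nonterminal X] (s₁.map Symbol.terminal ++ [Symbol.nonterminal Y₁] ++ s₂.map Symbol.terminal ++ [Symbol.nonterminal Y₂] ++ s₃.map Symbol.terminal). Then there exist a rule of G with left-hand side U and right-hand side [Symbol.nonterminal U₁, Symbol.nonterminal U₂], and terminal strings s₁', s₁'', s₂', s₂'', s₃', s₃'' with s₁ = s₁' ++ s₁'', s₂ = s₂' ++ s₂'', s₃ = s₃'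 ++ s₃'', such that G.Derives [Symbol.nonterminal X] (s₁'.map Symbol.terminal ++ [Symbol.nonterminal U] ++ s₃''.map Symbol.terminal), G.Derives [Symbol.nonterminal U₁] (s₁''.map Symbol.terminal ++ [Symbol.nonterminal Y₁] ++ s₂'.map Symbol.terminal), and G.Derives [Symbol.nonterminal U₂] (s₂''.map Symbol.terminal ++ [Symbol.nonterminal Y₂] ++ s₃'.map Symbol.terminal). -/
namespace Stmt15

open ContextFreeGrammar

variable {T : Type*}

lemma rewrites_append_split {N : Type*} (r : ContextFreeRule T N) :
    ∀ (u v w : List (Symbol T N)), r.Rewrites (u ++ v) w →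
      (∃ u', r.Rewrites u u' ∧ w = u' ++ v) ∨ (∃ v', r.Rewrites v v' ∧ w = u ++ v')
  | [], v, w, h => .inr ⟨w, h, rfl⟩
  | x :: u, v, w, h => by
    cases h with
    | head s =>
      exact .inl ⟨r.output ++ u, ContextFreeRule.Rewrites.head u, by simp⟩
    | cons _ h' =>
      rcases rewrites_append_split r u v _ h' with ⟨u', hu, rfl⟩ | ⟨v', hv, rfl⟩
      · exact .inl ⟨x :: u', hu.cons x, rfl⟩
      · exact .inr ⟨v', hv, rfl⟩

inductive DerivesIn (g : ContextFreeGrammar T) :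
    ℕ → List (Symbol T g.NT) → List (Symbol T g.NT) → Prop
  | refl (w) : DerivesIn g 0 w w
  | head {n u v w} : g.Produces u v → DerivesIn g n v w → DerivesIn g (n + 1) u w

lemma DerivesIn.toDerives {g : ContextFreeGrammar T} {n : ℕ} {u w : List (Symbol T g.NT)}
    (h : DerivesIn g n u w) : g.Derives u w := by
  induction h with
  | refl => exact Derives.refl _
  | head hp _ ih => exact hp.trans_derives ih

lemma derives_iff_derivesIn {g : ContextFreeGrammar T} {u w : List (Symbol T g.NT)} :
    g.Derives u w ↔ ∃ n, DerivesIn g n u w := by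
  constructor
  · intro h
    induction h using Relation.ReflTransGen.head_induction_on with
    | refl => exact ⟨0, .refl w⟩
    | head hp _ ih =>
      obtain ⟨n, hn⟩ := ih
      exact ⟨n + 1, .head hp hn⟩
  · rintro ⟨n, h⟩
    exact h.toDerives

lemma DerivesIn.append_split {g : ContextFreeGrammar T} {n : ℕ} {x w : List (Symbol T g.NT)}
    (h : DerivesIn g n x w) :
    ∀ u v, x = u ++ v → ∃ u' v' m k, m + k = n ∧ w = u' ++ v' ∧
      DerivesIn g m u u' ∧ DerivesIn g k v v' := by
  induction h with
  | refl w =>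
    rintro u v rfl
    exact ⟨u, v, 0, 0, rfl, rfl, .refl u, .refl v⟩
  | head hp _ ih =>
    rintro u v rfl
    obtain ⟨r, hr, hrw⟩ := hp
    rcases rewrites_append_split r u v _ hrw with ⟨u', hu, rfl⟩ | ⟨v', hv, rfl⟩
    · obtain ⟨a, b, m, k, hmk, rfl, ha, hb⟩ := ih u' v rfl
      exact ⟨a, b, m + 1, k, by omega, rfl, .head ⟨r, hr, hu⟩ ha, hb⟩
    · obtain ⟨a, b, m, k, hmk, rfl, ha, hb⟩ := ih u v' rfl
      exact ⟨a, b, m, k + 1, by omega, rfl, ha, .head ⟨r, hr, hv⟩ hb⟩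

lemma DerivesIn.eq_of_terminals {g : ContextFreeGrammar T} {n : ℕ} {s : List T}
    {w : List (Symbol T g.NT)} (h : DerivesIn g n (s.map Symbol.terminal) w) :
    w = s.map Symbol.terminal := by
  cases h with
  | refl => rfl
  | head hp _ =>
    exfalso
    obtain ⟨r, _, hrw⟩ := hp
    obtain ⟨p, q, heq, -⟩ := hrw.exists_parts
    have hmem : Symbol.nonterminal r.input ∈ s.map (Symbol.terminal (N := g.NT)) := by
      rw [heq]; simp
    simp at hmem

lemma rewrites_singleton {N : Type*} {r : ContextFreeRule T N} {X : N}
    {w : List (Symbol T N)} (h : r.Rewrites [Symbol.nonterminal X] w) :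
    r.input = X ∧ w = r.output := by
  obtain ⟨p, q, h1, h2⟩ := h.exists_parts
  cases p with
  | nil =>
    simp at h1
    obtain ⟨hX, hq⟩ := h1
    subst hq
    simp at h2
    exact ⟨hX.symm, h2⟩
  | cons a p =>
    simp at h1

lemma append_eq_append_singleton {α : Type*} {w₁ w₂ A B : List α} {y : α}
    (h : w₁ ++ w₂ = A ++ [y] ++ B) :
    (∃ B₁ B₂, B = B₁ ++ B₂ ∧ w₁ = A ++ [y] ++ B₁ ∧ w₂ = B₂) ∨
    (∃ A₁ A₂, A = A₁ ++ A₂ ∧ w₁ = A₁ ∧ w₂ = A₂ ++ [y] ++ B) := by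
  have h' : w₁ ++ w₂ = A ++ ([y] ++ B) := by rw [h, List.append_assoc]
  rcases List.append_eq_append_iff.mp h' with ⟨a, hA, hw⟩ | ⟨c, hw₁, hd⟩
  · refine .inr ⟨w₁, a, hA, rfl, ?_⟩
    rw [hA] at h'
    simpa using h'
  · cases c with
    | nil =>
      simp at hw₁ hd
      exact .inr ⟨A, [], by simp, hw₁, by simp [hd]⟩
    | cons z c' =>
      simp at hd
      obtain ⟨hz, hB⟩ := hd
      subst hz
      exact .inl ⟨c', w₂, hB, by simpa using hw₁, rfl⟩

lemma key (G : ContextFreeGrammar T)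
    (hcnf : ∀ r ∈ G.rules,
      (∃ B C : G.NT, r.output = [Symbol.nonterminal B, Symbol.nonterminal C]) ∨
        (∃ a : T, r.output = [Symbol.terminal a])) :
    ∀ n (X Y₁ Y₂ : G.NT) (s₁ s₂ s₃ : List T),
      DerivesIn G n [Symbol.nonterminal X]
        (s₁.map Symbol.terminal ++ [Symbol.nonterminal Y₁] ++ s₂.map Symbol.terminal ++
          [Symbol.nonterminal Y₂] ++ s₃.map Symbol.terminal) →
      ∃ U U₁ U₂ : G.NT,
        (⟨U, [Symbol.nonterminal U₁, Symbol.nonterminal U₂]⟩ : ContextFreeRule T G.NT) ∈ G.rules ∧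
        ∃ s₁' s₁'' s₂' s₂'' s₃' s₃'' : List T,
          s₁ = s₁' ++ s₁'' ∧ s₂ = s₂' ++ s₂'' ∧ s₃ = s₃' ++ s₃'' ∧
          G.Derives [Symbol.nonterminal X]
            (s₁'.map Symbol.terminal ++ [Symbol.nonterminal U] ++ s₃''.map Symbol.terminal) ∧
          G.Derives [Symbol.nonterminal U₁]
            (s₁''.map Symbol.terminal ++ [Symbol.nonterminal Y₁] ++ s₂'.map Symbol.terminal) ∧
          G.Derives [Symbol.nonterminal U₂]
            (s₂''.map Symbol.terminal ++ [Symbol.nonterminal Y₂] ++ s₃'.map Symbol.terminal) := by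
  intro n
  induction n using Nat.strong_induction_on with
  | _ n ih =>
  intro X Y₁ Y₂ s₁ s₂ s₃ h
  generalize hw : (s₁.map Symbol.terminal ++ [Symbol.nonterminal Y₁] ++ s₂.map Symbol.terminal ++
    [Symbol.nonterminal Y₂] ++ s₃.map (Symbol.terminal (N := G.NT))) = w at h
  cases h with
  | refl =>
    have := congrArg List.length hw
    simp at this
    omega
  | head hp hd =>
    rename_i m mid
    obtain ⟨r, hr, hrw⟩ := hp
    obtain ⟨hinput, rfl⟩ := rewrites_singleton hrw
    rcases hcnf r hr with ⟨B, C, hout⟩ | ⟨a, hout⟩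
    · -- branching rule X → B C
      rw [hout] at hd
      have hd' : DerivesIn G m ([Symbol.nonterminal B] ++ [Symbol.nonterminal C]) w := hd
      obtain ⟨w₁, w₂, k₁, k₂, hk, hww, h₁, h₂⟩ := hd'.append_split _ _ rfl
      have hrule : (⟨X, [Symbol.nonterminal B, Symbol.nonterminal C]⟩ :
          ContextFreeRule T G.NT) ∈ G.rules := by
        have : (⟨X, [Symbol.nonterminal B, Symbol.nonterminal C]⟩ :
            ContextFreeRule T G.NT) = r := by
          cases r; simp_all
        rw [this]; exact hr
      have hstep : G.Derives [Symbol.nonterminal X]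
          ([Symbol.nonterminal B] ++ [Symbol.nonterminal C]) :=
        Produces.single ⟨r, hr, by rw [hout] at hrw; exact hrw⟩
      rcases append_eq_append_singleton
          (A := s₁.map Symbol.terminal ++ [Symbol.nonterminal Y₁] ++ s₂.map Symbol.terminal)
          (y := Symbol.nonterminal Y₂) (B := s₃.map Symbol.terminal)
          (w₁ := w₁) (w₂ := w₂) (by rw [← hww, hw]) with
        ⟨B₁, B₂, hB, hw₁, hw₂⟩ | ⟨A₁, A₂, hA, hw₁, hw₂⟩
      · -- both Y₁, Y₂ inside w₁ (derived from B)
        obtain ⟨t₁, t₂, hs₃, hB₁, hB₂⟩ := List.map_eq_append_iff.mp hB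
        have h₁' : DerivesIn G k₁ [Symbol.nonterminal B]
            (s₁.map Symbol.terminal ++ [Symbol.nonterminal Y₁] ++ s₂.map Symbol.terminal ++
              [Symbol.nonterminal Y₂] ++ t₁.map Symbol.terminal) := by
          rw [hB₁, ← hw₁]; exact h₁
        obtain ⟨U, U₁, U₂, hUrule, a₁, a₂, b₁, b₂, c₁, c₂, e₁, e₂, e₃, d₀, d₁, d₂⟩ :=
          ih k₁ (by omega) B Y₁ Y₂ s₁ s₂ t₁ h₁'
        have h₂' : G.Derives [Symbol.nonterminal C] (t₂.map Symbol.terminal) := by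
          rw [hB₂, ← hw₂]; exact h₂.toDerives
        refine ⟨U, U₁, U₂, hUrule, a₁, a₂, b₁, b₂, c₁, c₂ ++ t₂, e₁, e₂, by
          rw [hs₃, e₃, List.append_assoc], ?_, d₁, d₂⟩
        have hder : G.Derives ([Symbol.nonterminal B] ++ [Symbol.nonterminal C])
            ((a₁.map Symbol.terminal ++ [Symbol.nonterminal U] ++ c₂.map Symbol.terminal) ++
              t₂.map Symbol.terminal) :=
          Derives.trans (d₀.append_right _) (Derives.append_left h₂' _)
        have heq : a₁.map (Symbol.terminal (N := G.NT)) ++ [Symbol.nonterminal U] ++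
            (c₂ ++ t₂).map Symbol.terminal =
            (a₁.map Symbol.terminal ++ [Symbol.nonterminal U] ++ c₂.map Symbol.terminal) ++
              t₂.map Symbol.terminal := by
          simp [List.append_assoc]
        rw [heq]
        exact hstep.trans hder
      · rcases append_eq_append_singleton (A := s₁.map Symbol.terminal)
            (y := Symbol.nonterminal Y₁) (B := s₂.map Symbol.terminal)
            (w₁ := A₁) (w₂ := A₂) hA.symm with
          ⟨C₁, C₂, hC, hA₁, hA₂⟩ | ⟨P₁, P₂, hP, hA₁, hA₂⟩
        · -- Y₁ from B, Y₂ from C : the rule X → B C itself branches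
          obtain ⟨u, v, hs₂, hC₁, hC₂⟩ := List.map_eq_append_iff.mp hC
          refine ⟨X, B, C, hrule, [], s₁, u, v, s₃, [], by simp, hs₂, by simp, ?_, ?_, ?_⟩
          · simpa using Derives.refl ([Symbol.nonterminal X] : List (Symbol T G.NT))
          · have : DerivesIn G k₁ [Symbol.nonterminal B]
                (s₁.map Symbol.terminal ++ [Symbol.nonterminal Y₁] ++ u.map Symbol.terminal) := by
              rw [hC₁, ← hA₁, ← hw₁]; exact h₁
            exact this.toDerives
          · have : DerivesIn G k₂ [Symbol.nonterminal C]
                (v.map Symbol.terminal ++ [Symbol.nonterminal Y₂] ++ s₃.map Symbol.terminal) := by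
              rw [hC₂, ← hA₂, ← hw₂]; exact h₂
            exact this.toDerives
        · -- both Y₁, Y₂ inside w₂ (derived from C)
          obtain ⟨p, q, hs₁, hP₁, hP₂⟩ := List.map_eq_append_iff.mp hP
          have h₁' : G.Derives [Symbol.nonterminal B] (p.map Symbol.terminal) := by
            rw [hP₁, ← hA₁, ← hw₁]; exact h₁.toDerives
          have h₂' : DerivesIn G k₂ [Symbol.nonterminal C]
              (q.map Symbol.terminal ++ [Symbol.nonterminal Y₁] ++ s₂.map Symbol.terminal ++
                [Symbol.nonterminal Y₂] ++ s₃.map Symbol.terminal) := by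
            have heq : q.map (Symbol.terminal (N := G.NT)) ++ [Symbol.nonterminal Y₁] ++
                s₂.map Symbol.terminal ++ [Symbol.nonterminal Y₂] ++ s₃.map Symbol.terminal =
                (q.map Symbol.terminal ++ [Symbol.nonterminal Y₁] ++ s₂.map Symbol.terminal) ++
                  [Symbol.nonterminal Y₂] ++ s₃.map Symbol.terminal := by
              simp [List.append_assoc]
            rw [heq, hP₂, ← hA₂, ← hw₂]
            exact h₂
          obtain ⟨U, U₁, U₂, hUrule, a₁, a₂, b₁, b₂, c₁, c₂, e₁, e₂, e₃, d₀, d₁, d₂⟩ :=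
            ih k₂ (by omega) C Y₁ Y₂ q s₂ s₃ h₂'
          refine ⟨U, U₁, U₂, hUrule, p ++ a₁, a₂, b₁, b₂, c₁, c₂, by
            rw [hs₁, e₁, List.append_assoc], e₂, e₃, ?_, d₁, d₂⟩
          have hder : G.Derives ([Symbol.nonterminal B] ++ [Symbol.nonterminal C])
              (p.map Symbol.terminal ++
                (a₁.map Symbol.terminal ++ [Symbol.nonterminal U] ++ c₂.map Symbol.terminal)) :=
            Derives.trans (h₁'.append_right _) (Derives.append_left d₀ _)
          have heq : (p ++ a₁).map (Symbol.terminal (N := G.NT)) ++ [Symbol.nonterminal U] ++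
              c₂.map Symbol.terminal =
              p.map Symbol.terminal ++
                (a₁.map Symbol.terminal ++ [Symbol.nonterminal U] ++ c₂.map Symbol.terminal) := by
            simp [List.append_assoc]
          rw [heq]
          exact hstep.trans hder
    · -- terminal rule: impossible
      exfalso
      rw [hout] at hd
      have hterm : w = [a].map Symbol.terminal :=
        DerivesIn.eq_of_terminals (s := [a]) (by simpa using hd)
      rw [← hw] at hterm
      have hmem : Symbol.nonterminal Y₁ ∈ List.map (Symbol.terminal (N := G.NT)) [a] := by
        rw [← hterm]; simp
      simp at hmem

end Stmt15

theorem stmt_15 {T : Type*} (G : ContextFreeGrammar T)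
    (hcnf : ∀ r ∈ G.rules,
      (∃ B C : G.NT, r.output = [Symbol.nonterminal B, Symbol.nonterminal C]) ∨
        (∃ a : T, r.output = [Symbol.terminal a]))
    (X Y₁ Y₂ : G.NT) (s₁ s₂ s₃ : List T)
    (h : G.Derives [Symbol.nonterminal X]
      (s₁.map Symbol.terminal ++ [Symbol.nonterminal Y₁] ++ s₂.map Symbol.terminal ++
        [Symbol.nonterminal Y₂] ++ s₃.map Symbol.terminal)) :
    ∃ U U₁ U₂ : G.NT,
      (⟨U, [Symbol.nonterminal U₁, Symbol.nonterminal U₂]⟩ : ContextFreeRule T G.NT) ∈ G.rules ∧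
      ∃ s₁' s₁'' s₂' s₂'' s₃' s₃'' : List T,
        s₁ = s₁' ++ s₁'' ∧ s₂ = s₂' ++ s₂'' ∧ s₃ = s₃' ++ s₃'' ∧
        G.Derives [Symbol.nonterminal X]
          (s₁'.map Symbol.terminal ++ [Symbol.nonterminal U] ++ s₃''.map Symbol.terminal) ∧
        G.Derives [Symbol.nonterminal U₁]
          (s₁''.map Symbol.terminal ++ [Symbol.nonterminal Y₁] ++ s₂'.map Symbol.terminal) ∧
        G.Derives [Symbol.nonterminal U₂]
          (s₂''.map Symbol.terminal ++ [Symbol.nonterminal Y₂] ++ s₃'.map Symbol.terminal) := by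
  obtain ⟨n, hn⟩ := Stmt15.derives_iff_derivesIn.mp h
  exact Stmt15.key G hcnf n X Y₁ Y₂ s₁ s₂ s₃ hn
end

section
/- Let Σ be a type, let E₁ be a Σ-labeled directed graph on a type V₁ and E₂ a Σ-labeled directed graph on a type V₂, and fix x₁ y₁ : V₁ and x₂ y₂ : V₂. Define the (Option Σ)-labeled directed graph E on V₁ ⊕ V₂ by: E (Sum.inl a) (some σ) (Sum.inl b) iff E₁ a σ b; E (Sum.inr a) (some σ) (Sum.inr b) iff E₂ b σ a; E (Sum.inl a) none (Sum.inr b) iff a = y₁ and b = y₂; and no other edges. Then there exists a word w : List Σ together with a walk from x₁ to y₁ labeled w in E₁ and a walk from x₂ to y₂ labeled w in E₂, if and only if there exists a word w : List Σ and a walk from Sum.inl x₁ to Sum.inr x₂ in E labeled (w.map some) ++ [none] ++ (w.reverse.map some). -/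
lemma natWalk_iff {V Γ : Type*} (E : V → Γ → V → Prop) (w : List Γ) (x y : V) :
    HasLabeledWalk E w x y ↔
      ∃ f : ℕ → V, f 0 = x ∧ f w.length = y ∧
        ∀ i, (h : i < w.length) → E (f i) w[i] (f (i+1)) := by
  constructor
  · rintro ⟨f, h0, hl, he⟩
    refine ⟨fun i => f ⟨min i w.length, by omega⟩, ?_, ?_, ?_⟩
    · simpa using h0
    · simpa [Fin.last] using hl
    · intro i h
      have := he ⟨i, h⟩
      simp only [Fin.castSucc, Fin.succ, Fin.castAdd, Fin.castLE, List.get_eq_getElem] at this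
      convert this using 3 <;> omega
  · rintro ⟨f, h0, hl, he⟩
    refine ⟨fun i => f i.val, h0, by simpa [Fin.last] using hl, ?_⟩
    intro i
    simpa using he i.val i.isLt

lemma getElem_W {α : Type*} (w : List α) (i : ℕ) (h : i < 2 * w.length + 1) :
    (w.map some ++ [none] ++ w.reverse.map some)[i]'(by simp; omega) =
      if h1 : i < w.length then some (w[i]'h1)
      else if h2 : i = w.length then none
      else some (w[2*w.length - i]'(by omega)) := by
  rcases Nat.lt_trichotomy i w.length with h1 | h1 | h1
  · rw [dif_pos h1,
      List.getElem_append_left (by simp; omega), List.getElem_append_left (by simpa using h1),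
      List.getElem_map]
  · rw [dif_neg (by omega), dif_pos h1,
      List.getElem_append_left (by simp; omega), List.getElem_append_right (by simp; omega)]
    simp [h1]
  · rw [dif_neg (by omega), dif_neg (by omega),
      List.getElem_append_right (by simp; omega)]
    simp only [List.getElem_map, List.getElem_reverse, Option.some.injEq]
    congr 1
    simp only [List.length_append, List.length_map, List.length_cons, List.length_nil]
    omega

theorem stmt_16 {Γ V₁ V₂ : Type*}
    (E₁ : V₁ → Γ → V₁ → Prop) (E₂ : V₂ → Γ → V₂ → Prop)
    (x₁ y₁ : V₁) (x₂ y₂ : V₂) :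
    (∃ w : List Γ, HasLabeledWalk E₁ w x₁ y₁ ∧ HasLabeledWalk E₂ w x₂ y₂) ↔
      ∃ w : List Γ,
        HasLabeledWalk
          (fun a σ b =>
            match a, σ, b with
            | Sum.inl a, some σ, Sum.inl b => E₁ a σ b
            | Sum.inr a, some σ, Sum.inr b => E₂ b σ a
            | Sum.inl a, none, Sum.inr b => a = y₁ ∧ b = y₂
            | _, _, _ => False)
          ((w.map some) ++ [none] ++ (w.reverse.map some))
          (Sum.inl x₁) (Sum.inr x₂) := by
  set E : V₁ ⊕ V₂ → Option Γ → V₁ ⊕ V₂ → Prop := fun a σ b =>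
            match a, σ, b with
            | Sum.inl a, some σ, Sum.inl b => E₁ a σ b
            | Sum.inr a, some σ, Sum.inr b => E₂ b σ a
            | Sum.inl a, none, Sum.inr b => a = y₁ ∧ b = y₂
            | _, _, _ => False with hE
  simp only [natWalk_iff]
  constructor
  · rintro ⟨w, ⟨f₁, h10, h1l, h1e⟩, ⟨f₂, h20, h2l, h2e⟩⟩
    set n := w.length with hn
    have hWlen : ((w.map some) ++ [none] ++ (w.reverse.map some)).length = 2 * n + 1 := by
      simp; omega
    refine ⟨w, fun i => if i ≤ n then Sum.inl (f₁ i) else Sum.inr (f₂ (2*n+1 - i)), ?_, ?_, ?_⟩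
    · simp [h10]
    · rw [hWlen]
      have : ¬ (2*n+1 ≤ n) := by omega
      simp [this, h20]
    · intro i hi
      rw [hWlen] at hi
      rw [getElem_W w i (by omega)]
      rcases Nat.lt_trichotomy i n with h | h | h
      · have h1 : i ≤ n := by omega
        have h2 : i + 1 ≤ n := by omega
        rw [dif_pos h]
        simp only [h1, h2, if_pos]
        exact h1e i h
      · have h1 : i ≤ n := by omega
        have h2 : ¬ (i + 1 ≤ n) := by omega
        rw [dif_neg (by omega), dif_pos h]
        simp only [h1, h2, if_pos, if_neg, not_false_iff]
        have e : 2*n+1 - (i+1) = n := by omega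
        rw [e, h, h1l, h2l]
        exact ⟨rfl, rfl⟩
      · have h1 : ¬ (i ≤ n) := by omega
        have h2 : ¬ (i + 1 ≤ n) := by omega
        rw [dif_neg (by omega), dif_neg (by omega)]
        simp only [h1, h2, if_neg, not_false_iff]
        have e1 : 2*n+1 - i = 2*n - i + 1 := by omega
        have e2 : 2*n+1 - (i+1) = 2*n - i := by omega
        rw [e1, e2]
        exact h2e (2*n - i) (by omega)
  · rintro ⟨w, g, hg0, hgl, hge⟩
    set n := w.length with hn
    have hWlen : ((w.map some) ++ [none] ++ (w.reverse.map some)).length = 2 * n + 1 := by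
      simp; omega
    rw [hWlen] at hgl
    have hge' : ∀ i, (h : i < 2*n+1) →
        E (g i) (if h1 : i < n then some (w[i]'h1)
                 else if h2 : i = n then none
                 else some (w[2*n - i]'(by omega))) (g (i+1)) := by
      intro i h
      have := hge i (by omega)
      rwa [getElem_W w i (by omega)] at this
    clear hge
    -- first half is inl
    have hfirst : ∀ i, i ≤ n → ∃ a, g i = Sum.inl a := by
      intro i hi
      induction i with
      | zero => exact ⟨x₁, hg0⟩
      | succ k ih =>
        obtain ⟨a, ha⟩ := ih (by omega)
        have hk : k < n := by omega
        have := hge' k (by omega)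
        rw [dif_pos hk, ha] at this
        cases hgk1 : g (k + 1) with
        | inl b => exact ⟨b, rfl⟩
        | inr b => rw [hgk1] at this; exact absurd this (by simp [hE])
    -- across the none edge
    obtain ⟨a, ha⟩ := hfirst n le_rfl
    have hmid := hge' n (by omega)
    rw [dif_neg (by omega), dif_pos rfl, ha] at hmid
    obtain ⟨b, hb, hay, hby⟩ : ∃ b, g (n+1) = Sum.inr b ∧ a = y₁ ∧ b = y₂ := by
      cases hgn1 : g (n + 1) with
      | inl c => rw [hgn1] at hmid; exact absurd hmid (by simp [hE])
      | inr c => rw [hgn1] at hmid; exact ⟨c, rfl, hmid⟩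
    -- second half is inr
    have hsecond : ∀ j, j ≤ n → ∃ c, g (n + 1 + j) = Sum.inr c := by
      intro j hj
      induction j with
      | zero => exact ⟨b, hb⟩
      | succ k ih =>
        obtain ⟨c, hc⟩ := ih (by omega)
        have := hge' (n + 1 + k) (by omega)
        rw [dif_neg (by omega), dif_neg (by omega), hc] at this
        cases hgk1 : g (n + 1 + k + 1) with
        | inl d => rw [hgk1] at this; exact absurd this (by simp [hE])
        | inr d => exact ⟨d, rfl⟩
    -- define the two walks
    set F : ℕ → V₁ := fun i => Sum.elim id (fun _ => x₁) (g i) with hF_def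
    have hF : ∀ i, i ≤ n → g i = Sum.inl (F i) := by
      intro i hi
      obtain ⟨a, ha⟩ := hfirst i hi
      simp only [hF_def, ha, Sum.elim_inl, id]
    set G : ℕ → V₂ := fun i => Sum.elim (fun _ => x₂) id (g i) with hG_def
    have hG : ∀ j, j ≤ n → g (n + 1 + j) = Sum.inr (G (n + 1 + j)) := by
      intro j hj
      obtain ⟨c, hc⟩ := hsecond j hj
      simp only [hG_def, hc, Sum.elim_inr, id]
    refine ⟨w, ⟨F, ?_, ?_, ?_⟩, ⟨fun j => G (n + 1 + (n - j)), ?_, ?_, ?_⟩⟩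
    · have := hF 0 (Nat.zero_le n)
      rw [hg0] at this
      exact ((Sum.inl.injEq _ _).mp this).symm
    · have := (hF n le_rfl).symm.trans ha
      rw [(Sum.inl.injEq _ _).mp this, hay]
    · intro i h
      have := hge' i (by omega)
      rw [dif_pos h, hF i (by omega), hF (i+1) (by omega)] at this
      exact this
    · show G (n + 1 + (n - 0)) = x₂
      rw [show n + 1 + (n - 0) = 2 * n + 1 from by omega]
      simp only [hG_def, hgl, Sum.elim_inr, id]
    · show G (n + 1 + (n - n)) = y₂
      rw [show n + 1 + (n - n) = n + 1 from by omega]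
      simp only [hG_def, hb, Sum.elim_inr, id]
      exact hby
    · intro j h
      have := hge' (n + 1 + (n - (j+1))) (by omega)
      rw [dif_neg (by omega), dif_neg (by omega)] at this
      simp only [show 2*n - (n + 1 + (n - (j+1))) = j from by omega,
        show n + 1 + (n - (j+1)) + 1 = n + 1 + (n - j) from by omega] at this
      rw [hG (n - (j+1)) (by omega), hG (n - j) (by omega)] at this
      exact this
end
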